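/- Leading-eigenvalue lower bound for survival in a ball: Let B ⊆ Z^d be finite, Q the killed random walk operator on l^2(B), with largest eigenvalue 1 - lambda^{(1)} (simple) and normalized eigenfunction phi^{(1)} ≥ 0, and second eigenvalue (of Q^2) equal to (1 - lambda^{(2)})^2 with lambda^{(2)} - lambda^{(1)} ≥ gamma > 0. Let N be even and 0 ∈ B with phi^{(1)}(0) ≥ beta > 0. Then P_0(walk stays in B and is at an even site at time N) = (Q^{N/2} applied twice, i.e. Q^N 1_e)(0) ≥ (1 - lambda^{(1)})^N beta^2 - (1 - lambda^{(2)})^N |B|^{1/2}. In particular, if (1-lambda^{(2)})^N |B|^{1/2} ≤ (1/2)(1-lambda^{(1)})^N beta^2, then P_0(tau_{B^c} > N) ≥ (1/2) exp(-N(lambda^{(1)} + (lambda^{(1)})^2)) beta^2. -/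

import Mathlib

/-
Adjacent sites have opposite parity, so `Q` exchanges functions supported on even and on odd
sites, and for even `N` the even part `φₑ` of `φ` satisfies `Qᴺ φₑ = (1 - λ₁)ᴺ φₑ`. Split
`1ₑ = c φₑ + g` with `g ⊥ φₑ`; being supported on even sites, `g ⊥ φₒ` too. The first term gives
`c (1 - λ₁)ᴺ φ(0)` at the origin, and `c ≥ φ(0) ≥ β` because `‖φₑ‖ ≤ 1`. The second is bounded
pointwise by its `l²` norm, hence by `(1 - λ₂)ᴺ ‖g‖ ≤ (1 - λ₂)ᴺ ‖1ₑ‖ ≤ (1 - λ₂)ᴺ |B|^{1/2}`.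
The survival bound then follows from positivity of `Q` and `1 - x ≥ exp (-x - x²)`.
-/

/-- Nearest-neighbor adjacency on `ℤ^d`. -/
def adjacentPt {d : ℕ} (x y : Fin d → ℤ) : Prop :=
  (∑ i, |x i - y i|) = 1

instance {d : ℕ} (x y : Fin d → ℤ) : Decidable (adjacentPt x y) := by
  unfold adjacentPt; infer_instance

/-- A lattice site is even if its coordinate sum is even. -/
def evenSite {d : ℕ} (x : Fin d → ℤ) : Prop := Even (∑ i, x i)

instance {d : ℕ} (x : Fin d → ℤ) : Decidable (evenSite x) := by
  unfold evenSite; infer_instance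

/-- The substochastic transition operator of simple symmetric random walk on
`ℤ^d` killed outside the finite set `B`, acting on functions on `B`. -/
noncomputable def Qop (d : ℕ) (B : Finset (Fin d → ℤ)) (f : ↥B → ℝ) :
    ↥B → ℝ :=
  fun u => (1 / (2 * (d : ℝ))) *
    ∑ v : ↥B, if adjacentPt (u : Fin d → ℤ) (v : Fin d → ℤ) then f v else 0

open Matrix

lemma exp_neg_add_sq_le_one_sub {x : ℝ} (hx0 : 0 ≤ x) (hx : x ≤ 1 / 2) :
    Real.exp (-(x + x ^ 2)) ≤ 1 - x := by
  have hexp := Real.quadratic_le_exp_of_nonneg (by positivity : 0 ≤ x + x ^ 2)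
  rw [Real.exp_neg, inv_le_iff_one_le_mul₀' (Real.exp_pos _)]
  nlinarith [mul_le_mul_of_nonneg_left hexp (by linarith : (0 : ℝ) ≤ 1 - x),
    mul_nonneg (sq_nonneg x) (by nlinarith : (0 : ℝ) ≤ 1 - x - x ^ 2 - x ^ 3)]

lemma exp_neg_mul_add_sq_le_one_sub_pow {x : ℝ} (hx0 : 0 ≤ x) (hx : x ≤ 1 / 2) (n : ℕ) :
    Real.exp (-(n : ℝ) * (x + x ^ 2)) ≤ (1 - x) ^ n := by
  rw [neg_mul, ← mul_neg, Real.exp_nat_mul]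
  exact pow_le_pow_left₀ (Real.exp_nonneg _) (exp_neg_add_sq_le_one_sub hx0 hx) n

section Projection

variable {ι : Type*} [Fintype ι]

lemma sq_le_dotProduct_self (v : ι → ℝ) (i : ι) : v i ^ 2 ≤ v ⬝ᵥ v := by
  rw [sq]; exact Finset.single_le_sum (fun j _ => mul_self_nonneg (v j)) (Finset.mem_univ i)

lemma abs_le_mul_sqrt_of_dotProduct_self_le {v : ι → ℝ} {a b : ℝ} (ha : 0 ≤ a)
    (hv : v ⬝ᵥ v ≤ a ^ 2 * b) (i : ι) : |v i| ≤ a * √b := by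
  rw [← Real.sqrt_sq ha, ← Real.sqrt_mul (sq_nonneg _)]
  exact (Real.abs_le_sqrt (sq_le_dotProduct_self v i)).trans (Real.sqrt_le_sqrt hv)

lemma sub_proj_dotProduct_eq_zero (v e : ι → ℝ) (he : e ⬝ᵥ e ≠ 0) :
    (v - (v ⬝ᵥ e / e ⬝ᵥ e) • e) ⬝ᵥ e = 0 := by
  rw [sub_dotProduct, smul_dotProduct, smul_eq_mul, div_mul_cancel₀ _ he, sub_self]

lemma sub_proj_dotProduct_self_le (v e : ι → ℝ) (he : e ⬝ᵥ e ≠ 0) :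
    (v - (v ⬝ᵥ e / e ⬝ᵥ e) • e) ⬝ᵥ (v - (v ⬝ᵥ e / e ⬝ᵥ e) • e) ≤ v ⬝ᵥ v := by
  have horth := sub_proj_dotProduct_eq_zero v e he
  set c := v ⬝ᵥ e / e ⬝ᵥ e
  set g := v - c • e
  have hv : v = g + c • e := (sub_add_cancel v _).symm
  rw [hv]
  simp only [add_dotProduct, dotProduct_add, smul_dotProduct, dotProduct_smul, dotProduct_comm e g,
    horth, smul_eq_mul]
  nlinarith [(by simpa using dotProduct_self_star_nonneg e : 0 ≤ e ⬝ᵥ e), sq_nonneg c]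

lemma le_sum_div_dotProduct_self {v : ι → ℝ} (hv : 0 ≤ v) (hpos : 0 < v ⬝ᵥ v) (hle : v ⬝ᵥ v ≤ 1)
    (i : ι) : v i ≤ (∑ j, v j) / (v ⬝ᵥ v) := by
  rw [le_div_iff₀ hpos]
  calc v i * (v ⬝ᵥ v) ≤ v i * 1 := mul_le_mul_of_nonneg_left hle (hv i)
    _ ≤ ∑ j, v j := by simpa using Finset.single_le_sum (fun j _ => hv j) (Finset.mem_univ i)

end Projection

lemma evenSite_iff_not_of_adjacentPt {d : ℕ} {x y : Fin d → ℤ} (h : adjacentPt x y) :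
    evenSite x ↔ ¬ evenSite y := by
  have hsum : Even (∑ i, (|x i - y i| - (x i - y i))) :=
    Finset.even_sum _ fun i _ => Int.even_sub.2 even_abs
  rw [Finset.sum_sub_distrib, h, Finset.sum_sub_distrib] at hsum
  have hodd : ¬ Even (∑ i, x i - ∑ i, y i) := fun he =>
    Int.not_even_one ((Int.even_sub.1 hsum).2 he)
  rw [Int.even_sub] at hodd
  unfold evenSite
  tauto

namespace Qop

variable {d : ℕ} {B : Finset (Fin d → ℤ)}

noncomputable def toLin (d : ℕ) (B : Finset (Fin d → ℤ)) : Module.End ℝ (↥B → ℝ) where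
  toFun := Qop d B
  map_add' f g := by
    funext u
    simp only [Qop, Pi.add_apply, ← mul_add, ← Finset.sum_add_distrib, ite_add_zero]
  map_smul' a f := by
    funext u
    simp only [Qop, Pi.smul_apply, smul_eq_mul, RingHom.id_apply, Finset.mul_sum, mul_ite,
      mul_zero, mul_left_comm]

lemma coe_toLin : ⇑(toLin d B) = Qop d B := rfl

lemma iterate_eq_pow (n : ℕ) : (Qop d B)^[n] = ⇑(toLin d B ^ n) := by
  rw [Module.End.coe_pow, coe_toLin]

lemma iterate_of_eq_smul {φ : ↥B → ℝ} {μ : ℝ} (h : Qop d B φ = μ • φ) (n : ℕ) :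
    (Qop d B)^[n] φ = μ ^ n • φ := by
  induction n with
  | zero => simp
  | succ n ih =>
    rw [Function.iterate_succ_apply', ih, ← coe_toLin, map_smul, coe_toLin, h, smul_smul, pow_succ]

lemma monotone : Monotone (Qop d B) := fun f g hfg u =>
  mul_le_mul_of_nonneg_left (Finset.sum_le_sum fun v _ => by split_ifs <;> simp [hfg v])
    (by positivity)

end Qop

section Parity

variable {d : ℕ} {B : Finset (Fin d → ℤ)}

def evenPart (f : ↥B → ℝ) : ↥B → ℝ := fun u => if evenSite (u : Fin d → ℤ) then f u else 0

def oddPart (f : ↥B → ℝ) : ↥B → ℝ := fun u => if ¬ evenSite (u : Fin d → ℤ) then f u else 0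

lemma evenPart_nonneg {f : ↥B → ℝ} (hf : 0 ≤ f) : 0 ≤ evenPart f := fun u => by
  unfold evenPart; split_ifs
  exacts [hf u, le_rfl]

lemma evenPart_le {f : ↥B → ℝ} (hf : 0 ≤ f) : evenPart f ≤ f := fun u => by
  unfold evenPart; split_ifs
  exacts [le_rfl, hf u]

lemma evenPart_add_oddPart (f : ↥B → ℝ) : evenPart f + oddPart f = f := by
  funext u
  by_cases h : evenSite (u : Fin d → ℤ) <;> simp [evenPart, oddPart, h]

lemma evenPart_dotProduct_oddPart (f g : ↥B → ℝ) : evenPart f ⬝ᵥ oddPart g = 0 :=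
  Finset.sum_eq_zero fun u _ => by
    by_cases h : evenSite (u : Fin d → ℤ) <;> simp [evenPart, oddPart, h]

lemma evenPart_dotProduct_self_le (f : ↥B → ℝ) : evenPart f ⬝ᵥ evenPart f ≤ f ⬝ᵥ f :=
  Finset.sum_le_sum fun u _ => by
    by_cases h : evenSite (u : Fin d → ℤ) <;> simp [evenPart, h, mul_self_nonneg]

lemma evenPart_one_dotProduct (f : ↥B → ℝ) : evenPart 1 ⬝ᵥ evenPart f = ∑ u, evenPart f u :=
  Finset.sum_congr rfl fun u _ => by
    by_cases h : evenSite (u : Fin d → ℤ) <;> simp [evenPart, h]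

lemma evenPart_one_dotProduct_self_le_card : evenPart (1 : ↥B → ℝ) ⬝ᵥ evenPart 1 ≤ B.card := by
  rw [evenPart_one_dotProduct]
  calc ∑ u, evenPart (1 : ↥B → ℝ) u ≤ ∑ _u : ↥B, (1 : ℝ) :=
        Finset.sum_le_sum fun u _ => by unfold evenPart; split_ifs <;> simp
    _ = B.card := by simp

lemma evenPart_apply_zero (h0 : (0 : Fin d → ℤ) ∈ B) (f : ↥B → ℝ) :
    evenPart f ⟨0, h0⟩ = f ⟨0, h0⟩ :=
  if_pos (by simp [evenSite])

lemma Qop_evenPart (f : ↥B → ℝ) : Qop d B (evenPart f) = oddPart (Qop d B f) := by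
  funext u
  have hterm : ∀ v : ↥B, (if adjacentPt (u : Fin d → ℤ) v then evenPart f v else 0) =
      if ¬ evenSite (u : Fin d → ℤ) then (if adjacentPt (u : Fin d → ℤ) v then f v else 0)
      else 0 := fun v => by
    by_cases huv : adjacentPt (u : Fin d → ℤ) v
    · have := evenSite_iff_not_of_adjacentPt huv
      by_cases hv : evenSite (v : Fin d → ℤ) <;> simp_all [evenPart]
    · simp [huv]
  simp only [Qop, oddPart, hterm]
  split_ifs <;> simp

lemma Qop_oddPart (f : ↥B → ℝ) : Qop d B (oddPart f) = evenPart (Qop d B f) := by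
  have h := congrArg (Qop d B) (evenPart_add_oddPart f)
  rw [← Qop.coe_toLin, map_add, Qop.coe_toLin, Qop_evenPart] at h
  rw [eq_sub_of_add_eq' h, eq_sub_of_add_eq (evenPart_add_oddPart _)]

lemma iterate_Qop_evenPart {n : ℕ} (hn : Even n) (f : ↥B → ℝ) :
    (Qop d B)^[n] (evenPart f) = evenPart ((Qop d B)^[n] f) := by
  have hcomm : Function.Commute (Qop d B)^[2] evenPart := fun f => by
    simp only [Function.iterate_succ_apply, Function.iterate_zero_apply, Qop_evenPart, Qop_oddPart]
  obtain ⟨k, rfl⟩ := hn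
  rw [← two_mul, Function.iterate_mul]
  exact hcomm.iterate_left k f

end Parity

lemma le_iterate_Qop_evenPart_one {d : ℕ} {B : Finset (Fin d → ℤ)} (h0 : (0 : Fin d → ℤ) ∈ B)
    {N : ℕ} (hN : Even N) {μ₁ μ₂ β : ℝ} {φ : ↥B → ℝ} (hnorm : φ ⬝ᵥ φ = 1) (hpos : 0 ≤ φ)
    (heig : Qop d B φ = μ₁ • φ) (hβ : 0 < β) (hφ0 : β ≤ φ ⟨0, h0⟩)
    (hsecond : ∀ f : ↥B → ℝ, f ⬝ᵥ evenPart φ = 0 → f ⬝ᵥ oddPart φ = 0 →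
      (Qop d B)^[N] f ⬝ᵥ (Qop d B)^[N] f ≤ μ₂ ^ (2 * N) * f ⬝ᵥ f) :
    μ₁ ^ N * β ^ 2 - μ₂ ^ N * √(B.card : ℝ) ≤ (Qop d B)^[N] (evenPart 1) ⟨0, h0⟩ := by
  have hee : 0 < evenPart φ ⬝ᵥ evenPart φ := by
    have := sq_le_dotProduct_self (evenPart φ) ⟨0, h0⟩
    rw [evenPart_apply_zero] at this
    nlinarith
  have hc : φ ⟨0, h0⟩ ≤ evenPart 1 ⬝ᵥ evenPart φ / evenPart φ ⬝ᵥ evenPart φ := by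
    rw [← evenPart_apply_zero h0 φ, evenPart_one_dotProduct]
    exact le_sum_div_dotProduct_self (evenPart_nonneg hpos) hee
      ((evenPart_dotProduct_self_le φ).trans hnorm.le) _
  set c := evenPart 1 ⬝ᵥ evenPart φ / evenPart φ ⬝ᵥ evenPart φ
  set g := evenPart 1 - c • evenPart φ
  have hg : |(Qop d B)^[N] g ⟨0, h0⟩| ≤ μ₂ ^ N * √(B.card : ℝ) := by
    refine abs_le_mul_sqrt_of_dotProduct_self_le (hN.pow_nonneg μ₂)
      ((hsecond g ?_ ?_).trans ?_) _
    · exact sub_proj_dotProduct_eq_zero _ _ hee.ne'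
    · simp only [g, sub_dotProduct, smul_dotProduct, evenPart_dotProduct_oddPart, smul_zero,
        sub_zero]
    · rw [← pow_mul']
      exact mul_le_mul_of_nonneg_left
        ((sub_proj_dotProduct_self_le _ _ hee.ne').trans evenPart_one_dotProduct_self_le_card)
        ((even_two_mul N).pow_nonneg μ₂)
  have hdecomp : (Qop d B)^[N] (evenPart 1) ⟨0, h0⟩ =
      (Qop d B)^[N] g ⟨0, h0⟩ + c * (μ₁ ^ N * φ ⟨0, h0⟩) := by
    rw [show evenPart 1 = g + c • evenPart φ from (sub_add_cancel _ _).symm, Qop.iterate_eq_pow,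
      map_add, map_smul, ← Qop.iterate_eq_pow, iterate_Qop_evenPart hN,
      Qop.iterate_of_eq_smul heig]
    simp [evenPart_apply_zero]
  have hcφ : β ^ 2 ≤ c * φ ⟨0, h0⟩ := by nlinarith
  rw [hdecomp]
  nlinarith [mul_le_mul_of_nonneg_left hcφ (hN.pow_nonneg μ₁), neg_abs_le ((Qop d B)^[N] g ⟨0, h0⟩)]

theorem survival_eigenvalue_lower_bound_general (d : ℕ)
    (B : Finset (Fin d → ℤ)) (h0 : (0 : Fin d → ℤ) ∈ B)
    (N : ℕ) (hNeven : Even N)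
    (lam1 lam2 beta : ℝ)
    (hlam1 : 0 < lam1)
    (hsmall : lam1 ≤ 1 / 2)
    (phi : ↥B → ℝ)
    (hnorm : ∑ u : ↥B, (phi u) ^ 2 = 1)
    (hpos : ∀ u, 0 ≤ phi u)
    (heig : Qop d B phi = fun u => (1 - lam1) * phi u)
    (hbeta : 0 < beta) (hphi0 : beta ≤ phi ⟨0, h0⟩)
    (hsecond : ∀ f : ↥B → ℝ,
      (∑ u : ↥B, f u * (if evenSite (u : Fin d → ℤ) then phi u else 0)) = 0 →
      (∑ u : ↥B, f u * (if ¬ evenSite (u : Fin d → ℤ) then phi u else 0)) = 0 →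
      ∑ u : ↥B, ((Qop d B)^[N] f u) ^ 2 ≤
        (1 - lam2) ^ (2 * N) * ∑ u : ↥B, (f u) ^ 2) :
    (1 - lam1) ^ N * beta ^ 2 - (1 - lam2) ^ N * Real.sqrt (B.card : ℝ) ≤
        (Qop d B)^[N]
          (fun u : ↥B => if evenSite (u : Fin d → ℤ) then 1 else 0) ⟨0, h0⟩ ∧
      ((1 - lam2) ^ N * Real.sqrt (B.card : ℝ) ≤
          (1 / 2) * (1 - lam1) ^ N * beta ^ 2 →
        (1 / 2) * Real.exp (-(N : ℝ) * (lam1 + lam1 ^ 2)) * beta ^ 2 ≤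
          (Qop d B)^[N] (fun _ : ↥B => (1 : ℝ)) ⟨0, h0⟩) := by
  have heven : (1 - lam1) ^ N * beta ^ 2 - (1 - lam2) ^ N * √(B.card : ℝ) ≤
      (Qop d B)^[N] (evenPart 1) ⟨0, h0⟩ :=
    le_iterate_Qop_evenPart_one h0 hNeven (by simpa only [dotProduct, sq] using hnorm) hpos heig
      hbeta hphi0 (by simpa only [dotProduct, sq, evenPart, oddPart] using hsecond)
  refine ⟨heven, fun hdom => ?_⟩
  calc (1 / 2) * Real.exp (-(N : ℝ) * (lam1 + lam1 ^ 2)) * beta ^ 2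
      ≤ (1 / 2) * (1 - lam1) ^ N * beta ^ 2 := by
        gcongr
        exact exp_neg_mul_add_sq_le_one_sub_pow hlam1.le hsmall N
    _ ≤ (1 - lam1) ^ N * beta ^ 2 - (1 - lam2) ^ N * √(B.card : ℝ) := by linarith
    _ ≤ (Qop d B)^[N] (evenPart 1) ⟨0, h0⟩ := heven
    _ ≤ (Qop d B)^[N] 1 ⟨0, h0⟩ := Qop.monotone.iterate N (evenPart_le zero_le_one) _

/-- **Leading-eigenvalue lower bound for survival in a ball (Lemma A.4, core).**
Let `Q` be the killed walk operator on `l²(B)` with simple top eigenvalue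
`1 − λ₁`, nonnegative normalized eigenfunction `φ` with `φ(0) ≥ β > 0`, and
second eigenvalue of `Q²` equal to `(1 − λ₂)²` with `λ₂ − λ₁ ≥ γ > 0` (encoded
by the operator bound on the orthogonal complement of `span{φ·1_e, φ·1_o}`).
Then for even `N`,
`Q^N 1_e(0) ≥ (1 − λ₁)^N β² − (1 − λ₂)^N |B|^{1/2}`; in particular, if
`(1 − λ₂)^N |B|^{1/2} ≤ ½ (1 − λ₁)^N β²`, then
`P_0(τ_{B^c} > N) = Q^N 1(0) ≥ ½ exp(−N(λ₁ + λ₁²)) β²`. -/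
theorem survival_eigenvalue_lower_bound (d : ℕ) (hd : 1 ≤ d)
    (B : Finset (Fin d → ℤ)) (h0 : (0 : Fin d → ℤ) ∈ B)
    (N : ℕ) (hNeven : Even N)
    (lam1 lam2 beta gamma : ℝ)
    (hlam1 : 0 < lam1) (hl12 : lam1 ≤ lam2) (hlam2 : lam2 < 1)
    (hsmall : lam1 ≤ 1 / 2)
    (hgamma : 0 < gamma) (hgap : gamma ≤ lam2 - lam1)
    (phi : ↥B → ℝ)
    (hnorm : ∑ u : ↥B, (phi u) ^ 2 = 1)
    (hpos : ∀ u, 0 ≤ phi u)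
    (heig : Qop d B phi = fun u => (1 - lam1) * phi u)
    (hbeta : 0 < beta) (hphi0 : beta ≤ phi ⟨0, h0⟩)
    (hsecond : ∀ f : ↥B → ℝ,
      (∑ u : ↥B, f u * (if evenSite (u : Fin d → ℤ) then phi u else 0)) = 0 →
      (∑ u : ↥B, f u * (if ¬ evenSite (u : Fin d → ℤ) then phi u else 0)) = 0 →
      ∑ u : ↥B, ((Qop d B)^[N] f u) ^ 2 ≤
        (1 - lam2) ^ (2 * N) * ∑ u : ↥B, (f u) ^ 2) :
    (1 - lam1) ^ N * beta ^ 2 - (1 - lam2) ^ N * Real.sqrt (B.card : ℝ) ≤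
        (Qop d B)^[N]
          (fun u : ↥B => if evenSite (u : Fin d → ℤ) then 1 else 0) ⟨0, h0⟩ ∧
      ((1 - lam2) ^ N * Real.sqrt (B.card : ℝ) ≤
          (1 / 2) * (1 - lam1) ^ N * beta ^ 2 →
        (1 / 2) * Real.exp (-(N : ℝ) * (lam1 + lam1 ^ 2)) * beta ^ 2 ≤
          (Qop d B)^[N] (fun _ : ↥B => (1 : ℝ)) ⟨0, h0⟩) :=
  survival_eigenvalue_lower_bound_general d B h0 N hNeven lam1 lam2 beta hlam1 hsmall phi hnorm hpos
    heig hbeta hphi0 hsecond
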